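/- arXiv:2601.11548 — 7 statements merged into one kernel-verified Lean document; each statement's English description precedes it below -/
import Mathlib

section
/- Let Q ⊂ ℝ^d be a nonempty compact convex set with diameter D, let f : ℝ^d → ℝ be convex with L-Lipschitz gradient on Q, let δ ≥ 0, and for each k let g_δ(x_k) satisfy the δ-oracle condition |⟨g_δ(x_k) − ∇f(x_k), x_k − y⟩| ≤ δ for all y ∈ Q. Consider the Frank–Wolfe iterates x_{k+1} = x_k + ᾱ_k (x̃_k − x_k) with ᾱ_k ∈ [0,1) and x̃_k ∈ argmin_{x ∈ Q} ⟨g_δ(x_k), x − x_k⟩. Then for every k, f(x_{k+1}) − f* ≤ (1 − ᾱ_k)(f(x_k) − f*) + 2 ᾱ_k δ + (1/2) L D² ᾱ_k², where f* = min_{x ∈ Q} f(x). -/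
/-!
Along the step `x⁺ = x + α (x̃ - x)` the descent inequality for an `L`-smooth function gives
`f x⁺ ≤ f x + α ⟪∇f x, x̃ - x⟫ + (L / 2) α² D²`. The oracle error is paid twice, once to replace
`∇f x` by `g` so that the minimality of `x̃` can be compared with a minimiser `x⋆` of `f` on `Q`,
and once to switch back; so `⟪∇f x, x̃ - x⟫ ≤ ⟪∇f x, x⋆ - x⟫ + 2δ ≤ f⋆ - f x + 2δ` by convexity.
-/

open RealInnerProductSpace Set AffineMap

section InnerProductSpace

variable {F : Type*} [NormedAddCommGroup F] [InnerProductSpace ℝ F]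

theorem inner_sub_le_of_isMinOn_of_abs_inner_sub_le {Q : Set F} {g G x xt : F} {δ : ℝ}
    (horacle : ∀ y ∈ Q, |⟪g - G, x - y⟫| ≤ δ) (hxt : xt ∈ Q)
    (hmin : IsMinOn (fun y => ⟪g, y - x⟫) Q xt) {y : F} (hy : y ∈ Q) :
    ⟪G, xt - x⟫ ≤ ⟪G, y - x⟫ + 2 * δ := by
  have hxt_err := le_of_abs_le (horacle xt hxt)
  have hy_err := neg_le_of_abs_le (horacle y hy)
  have hg : ⟪g, xt - x⟫ ≤ ⟪g, y - x⟫ := hmin hy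
  simp only [inner_sub_left, inner_sub_right] at hxt_err hy_err hg ⊢
  linarith

theorem frankWolfe_iterate_mem {Q : Set F} (hQ : Convex ℝ Q) {x xt : ℕ → F} {α : ℕ → ℝ}
    (hα : ∀ k, α k ∈ Icc (0 : ℝ) 1) (hx0 : x 0 ∈ Q) (hxt : ∀ k, xt k ∈ Q)
    (hupd : ∀ k, x (k + 1) = x k + α k • (xt k - x k)) (k : ℕ) : x k ∈ Q := by
  induction k with
  | zero => exact hx0
  | succ k ih => exact hupd k ▸ hQ.add_smul_sub_mem ih (hxt k) (hα k)

variable [CompleteSpace F]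

theorem hasDerivAt_comp_lineMap {f : F → ℝ} {a b : F} {t : ℝ}
    (hf : DifferentiableAt ℝ f (lineMap a b t)) :
    HasDerivAt (f ∘ lineMap a b) ⟪gradient f (lineMap a b t), b - a⟫ t := by
  simpa using hf.hasGradientAt.hasFDerivAt.comp_hasDerivAt t hasDerivAt_lineMap

theorem ConvexOn.inner_gradient_le_sub {Q : Set F} {f : F → ℝ} (hf : ConvexOn ℝ Q f)
    {a b : F} (ha : a ∈ Q) (hb : b ∈ Q) (hfa : DifferentiableAt ℝ f a) :
    ⟪gradient f a, b - a⟫ ≤ f b - f a := by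
  have h := (hf.comp_affineMap (lineMap a b)).le_slope_of_hasDerivAt
    (by simpa using ha) (by simpa using hb) one_pos
    (hasDerivAt_comp_lineMap (t := 0) (by simpa using hfa))
  simpa [slope_def_field] using h

theorem inner_gradient_lineMap_le {Q : Set F} {f : F → ℝ} {L : ℝ}
    (hLip : ∀ x ∈ Q, ∀ y ∈ Q, ‖gradient f x - gradient f y‖ ≤ L * ‖x - y‖)
    {a b : F} {t : ℝ} (ha : a ∈ Q) (hmem : lineMap a b t ∈ Q) (ht : 0 ≤ t) :
    ⟪gradient f (lineMap a b t), b - a⟫ ≤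
      ⟪gradient f a, b - a⟫ + L * t * ‖b - a‖ ^ 2 :=
  calc ⟪gradient f (lineMap a b t), b - a⟫
      = ⟪gradient f a, b - a⟫ + ⟪gradient f (lineMap a b t) - gradient f a, b - a⟫ := by
        rw [inner_sub_left]; ring
    _ ≤ ⟪gradient f a, b - a⟫ + L * ‖lineMap a b t - a‖ * ‖b - a‖ := by
        gcongr
        exact (real_inner_le_norm _ _).trans
          (mul_le_mul_of_nonneg_right (hLip _ hmem a ha) (norm_nonneg _))
    _ = ⟪gradient f a, b - a⟫ + L * t * ‖b - a‖ ^ 2 := by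
        rw [lineMap_apply_module', add_sub_cancel_right, norm_smul, Real.norm_of_nonneg ht]
        ring

theorem le_add_inner_gradient_add_of_lipschitzOn_gradient {Q : Set F} (hQ : Convex ℝ Q)
    {f : F → ℝ} {L : ℝ} (hdiff : ∀ x ∈ Q, DifferentiableAt ℝ f x)
    (hLip : ∀ x ∈ Q, ∀ y ∈ Q, ‖gradient f x - gradient f y‖ ≤ L * ‖x - y‖)
    {a b : F} (ha : a ∈ Q) (hb : b ∈ Q) :
    f b ≤ f a + ⟪gradient f a, b - a⟫ + L / 2 * ‖b - a‖ ^ 2 := by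
  have hseg : ∀ t ∈ Icc (0 : ℝ) 1, lineMap a b t ∈ Q := fun t ht => hQ.lineMap_mem ha hb ht
  -- The gap between `f` and its quadratic upper model is antitone along the segment.
  set gap : ℝ → ℝ := fun t =>
    (f ∘ lineMap a b) t - t * ⟪gradient f a, b - a⟫ - L / 2 * t ^ 2 * ‖b - a‖ ^ 2
  have hgap' : ∀ t ∈ Icc (0 : ℝ) 1, HasDerivAt gap (⟪gradient f (lineMap a b t), b - a⟫
      - ⟪gradient f a, b - a⟫ - L * t * ‖b - a‖ ^ 2) t := fun t ht => by
    have := ((hasDerivAt_comp_lineMap (hdiff _ (hseg t ht))).sub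
      ((hasDerivAt_id t).mul_const ⟪gradient f a, b - a⟫)).sub
      (((hasDerivAt_pow 2 t).const_mul (L / 2)).mul_const (‖b - a‖ ^ 2))
    exact this.congr_deriv (by norm_num only; ring)
  have hanti : AntitoneOn gap (Icc 0 1) := by
    refine antitoneOn_of_hasDerivWithinAt_nonpos (convex_Icc 0 1)
      (fun t ht => (hgap' t ht).continuousAt.continuousWithinAt)
      (fun t ht => (hgap' t (interior_subset ht)).hasDerivWithinAt) fun t ht => ?_
    have ht' := interior_subset ht
    linarith [inner_gradient_lineMap_le hLip ha (hseg t ht') ht'.1]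
  have := hanti (left_mem_Icc.mpr zero_le_one) (right_mem_Icc.mpr zero_le_one) zero_le_one
  simp only [gap, Function.comp_apply, lineMap_apply_zero, lineMap_apply_one] at this
  linarith

end InnerProductSpace

theorem mul_sq_norm_sub_le_mul_sq_diam {E G : Type*} [SeminormedAddCommGroup E]
    [SeminormedAddCommGroup G] {Q : Set E} (hQ : Bornology.IsBounded Q) {h : E → G} {L : ℝ}
    (hLip : ∀ x ∈ Q, ∀ y ∈ Q, ‖h x - h y‖ ≤ L * ‖x - y‖)
    {a b : E} (ha : a ∈ Q) (hb : b ∈ Q) :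
    L * ‖a - b‖ ^ 2 ≤ L * Metric.diam Q ^ 2 := by
  rcases le_or_gt 0 L with hL | hL
  · have := Metric.dist_le_diam_of_mem hQ ha hb
    rw [dist_eq_norm] at this
    gcongr
  · -- A negative Lipschitz constant forces all points of `Q` to be at distance zero.
    have hzero : ∀ x ∈ Q, ∀ y ∈ Q, ‖x - y‖ = 0 := fun x hx y hy => by
      nlinarith [norm_nonneg (x - y), norm_nonneg (h x - h y), hLip x hx y hy]
    have hdiam : Metric.diam Q = 0 :=
      le_antisymm (Metric.diam_le_of_forall_dist_le le_rfl fun x hx y hy =>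
        (dist_eq_norm x y).trans_le (hzero x hx y hy).le) Metric.diam_nonneg
    simp [hzero a ha b hb, hdiam]

theorem frankWolfe_delta_oracle_one_step_general {d : ℕ}
    (Q : Set (EuclideanSpace ℝ (Fin d)))
    (hQcomp : IsCompact Q) (hQconv : Convex ℝ Q)
    (f : EuclideanSpace ℝ (Fin d) → ℝ) (L δ : ℝ)
    (hconv : ConvexOn ℝ Q f)
    (hdiff : ∀ x ∈ Q, DifferentiableAt ℝ f x)
    (hLip : ∀ x ∈ Q, ∀ y ∈ Q, ‖gradient f x - gradient f y‖ ≤ L * ‖x - y‖)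
    (x xt g : ℕ → EuclideanSpace ℝ (Fin d)) (α : ℕ → ℝ)
    (hα : ∀ k, α k ∈ Set.Ico (0 : ℝ) 1)
    (hx0 : x 0 ∈ Q)
    (horacle : ∀ k, ∀ y ∈ Q, |⟪g k - gradient f (x k), x k - y⟫| ≤ δ)
    (hxtQ : ∀ k, xt k ∈ Q)
    (hmin : ∀ k, ∀ y ∈ Q, ⟪g k, xt k - x k⟫ ≤ ⟪g k, y - x k⟫)
    (hupd : ∀ k, x (k + 1) = x k + α k • (xt k - x k)) :
    ∀ k, f (x (k + 1)) - sInf (f '' Q) ≤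
      (1 - α k) * (f (x k) - sInf (f '' Q)) + 2 * α k * δ
        + (1 / 2) * L * (Metric.diam Q) ^ 2 * (α k) ^ 2 := by
  have hxQ : ∀ k, x k ∈ Q :=
    frankWolfe_iterate_mem hQconv (fun k => Ico_subset_Icc_self (hα k)) hx0 hxtQ hupd
  obtain ⟨xs, hxsQ, hfxs⟩ : sInf (f '' Q) ∈ f '' Q :=
    (hQcomp.image_of_continuousOn fun z hz =>
      (hdiff z hz).continuousAt.continuousWithinAt).sInf_mem ⟨f (x 0), mem_image_of_mem f hx0⟩
  intro k
  have hdesc := le_add_inner_gradient_add_of_lipschitzOn_gradient hQconv hdiff hLip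
    (hxQ k) (hxQ (k + 1))
  rw [hupd k, add_sub_cancel_left, real_inner_smul_right, norm_smul,
    Real.norm_of_nonneg (hα k).1, mul_pow] at hdesc
  have hdir : ⟪gradient f (x k), xt k - x k⟫ ≤ f xs - f (x k) + 2 * δ := by
    have := inner_sub_le_of_isMinOn_of_abs_inner_sub_le (horacle k) (hxtQ k) (hmin k) hxsQ
    linarith [hconv.inner_gradient_le_sub (hxQ k) hxsQ (hdiff _ (hxQ k))]
  have hdiam := mul_sq_norm_sub_le_mul_sq_diam hQcomp.isBounded hLip (hxtQ k) (hxQ k)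
  rw [hupd k, ← hfxs]
  linarith [mul_le_mul_of_nonneg_left hdir (hα k).1,
    mul_le_mul_of_nonneg_left hdiam (sq_nonneg (α k))]

/-- One-step inequality for Frank–Wolfe with a δ-oracle on a convex smooth
objective: `f(x_{k+1}) - f* ≤ (1 - ᾱ_k)(f(x_k) - f*) + 2ᾱ_k δ + (L D²/2) ᾱ_k²`. -/
theorem frankWolfe_delta_oracle_one_step {d : ℕ}
    (Q : Set (EuclideanSpace ℝ (Fin d)))
    (hQne : Q.Nonempty) (hQcomp : IsCompact Q) (hQconv : Convex ℝ Q)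
    (f : EuclideanSpace ℝ (Fin d) → ℝ) (L δ : ℝ) (hδ : 0 ≤ δ)
    (hconv : ConvexOn ℝ Q f)
    (hdiff : ∀ x ∈ Q, DifferentiableAt ℝ f x)
    (hLip : ∀ x ∈ Q, ∀ y ∈ Q, ‖gradient f x - gradient f y‖ ≤ L * ‖x - y‖)
    (x xt g : ℕ → EuclideanSpace ℝ (Fin d)) (α : ℕ → ℝ)
    (hα : ∀ k, α k ∈ Set.Ico (0 : ℝ) 1)
    (hx0 : x 0 ∈ Q)
    (horacle : ∀ k, ∀ y ∈ Q, |⟪g k - gradient f (x k), x k - y⟫| ≤ δ)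
    (hxtQ : ∀ k, xt k ∈ Q)
    (hmin : ∀ k, ∀ y ∈ Q, ⟪g k, xt k - x k⟫ ≤ ⟪g k, y - x k⟫)
    (hupd : ∀ k, x (k + 1) = x k + α k • (xt k - x k)) :
    ∀ k, f (x (k + 1)) - sInf (f '' Q) ≤
      (1 - α k) * (f (x k) - sInf (f '' Q)) + 2 * α k * δ
        + (1 / 2) * L * (Metric.diam Q) ^ 2 * (α k) ^ 2 :=
  frankWolfe_delta_oracle_one_step_general Q hQcomp hQconv f L δ hconv hdiff hLip x xt g α hα hx0
    horacle hxtQ hmin hupd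
end

section
/- Let Q ⊂ ℝ^d be a nonempty compact convex set with diameter D, let f : ℝ^d → ℝ be convex with L-Lipschitz gradient on Q, let δ ≥ 0, and for each k let g_δ(x_k) be a δ-oracle gradient at x_k. Consider the Frank–Wolfe iterates x_{k+1} = x_k + ᾱ_k (x̃_k − x_k), x̃_k ∈ argmin_{x ∈ Q} ⟨g_δ(x_k), x − x_k⟩, with step sizes ᾱ_k ∈ [0,1) satisfying Σ_{k=0}^∞ ᾱ_k = ∞ and Σ_{k=0}^∞ ᾱ_k² < ∞. Then limsup_{k→∞} (f(x_k) − f*) ≤ 2δ, where f* = min_{x ∈ Q} f(x). -/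
/-!
With `f*` attained at a minimizer `xs` of `f` on `Q`, put `u_k = f(x_k) - f* - 2δ`. The descent
lemma for the `L`-smooth `f`, the gradient inequality of convexity at `xs`, and the oracle bound at
`x̃_k` and at `xs` give `u_{k+1} ≤ (1 - ᾱ_k) u_k + (|L| D² / 2) ᾱ_k²`. Since `Σ ᾱ_k = ∞`, the
sequence `u` cannot stay above any `ε > 0`; since `Σ ᾱ_k² < ∞`, once it falls below `ε / 2` late
enough it never climbs above `ε` again.
-/

open RealInnerProductSpace Filter Finset AffineMap

section Recursion

variable {u α β : ℕ → ℝ}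

lemma frequently_le_of_le_one_sub_mul_add (hα0 : ∀ k, 0 ≤ α k) (hα : ¬ Summable α)
    (hβ : Summable β) (hrec : ∀ k, u (k + 1) ≤ (1 - α k) * u k + β k) {c : ℝ} (hc : 0 < c) :
    ∃ᶠ k in atTop, u k ≤ c := by
  by_contra h
  obtain ⟨N, hN⟩ := eventually_atTop.1 (not_frequently.1 h)
  set A := fun n => ∑ i ∈ range n, α i
  set B := fun n => ∑ i ∈ range n, β i
  -- While `u > c`, each step lowers `u` by at least `c α_k - β_k`.
  have hdecr : ∀ m ≥ N, u m + c * A m - B m ≤ u N + c * A N - B N := by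
    intro m hm
    induction m, hm using Nat.le_induction with
    | base => exact le_rfl
    | succ m hm ih =>
      simp only [A, B, sum_range_succ]
      nlinarith [hrec m, lt_of_not_ge (hN m hm), hα0 m]
  have hbot : Tendsto (fun m => -(c * A m) + (u N + c * A N - B N + B m)) atTop atBot :=
    (tendsto_neg_atTop_atBot.comp
      (((not_summable_iff_tendsto_nat_atTop_of_nonneg hα0).1 hα).const_mul_atTop hc)).atBot_add
      (hβ.tendsto_sum_tsum_nat.const_add _)
  obtain ⟨m, hmc, hmN⟩ := ((hbot.eventually_le_atBot c).and (eventually_ge_atTop N)).exists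
  linarith [hdecr m hmN, lt_of_not_ge (hN m hmN)]

lemma le_max_add_sum_Ico_of_le_one_sub_mul_add (hα0 : ∀ k, 0 ≤ α k) (hα1 : ∀ k, α k ≤ 1)
    (hβ0 : ∀ k, 0 ≤ β k) (hrec : ∀ k, u (k + 1) ≤ (1 - α k) * u k + β k) {K m : ℕ}
    (hKm : K ≤ m) : u m ≤ max (u K) 0 + ∑ i ∈ Ico K m, β i := by
  induction m, hKm using Nat.le_induction with
  | base => simp
  | succ m hKm ih =>
    rw [sum_Ico_succ_top hKm]
    have hsum : 0 ≤ ∑ i ∈ Ico K m, β i := sum_nonneg fun i _ => hβ0 i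
    rcases le_total (u m) 0 with hu | hu
    · nlinarith [hrec m, hα1 m, le_max_right (u K) 0]
    · nlinarith [hrec m, hα0 m]

lemma sum_Ico_le_tsum_nat_add (hβ0 : ∀ k, 0 ≤ β k) (hβ : Summable β) (K m : ℕ) :
    ∑ i ∈ Ico K m, β i ≤ ∑' k, β (k + K) := by
  rw [sum_Ico_eq_sum_range]
  simp_rw [add_comm K]
  exact ((summable_nat_add_iff K).2 hβ).sum_le_tsum _ fun i _ => hβ0 _

theorem eventually_le_of_le_one_sub_mul_add (hα0 : ∀ k, 0 ≤ α k) (hα1 : ∀ k, α k ≤ 1)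
    (hα : ¬ Summable α) (hβ0 : ∀ k, 0 ≤ β k) (hβ : Summable β)
    (hrec : ∀ k, u (k + 1) ≤ (1 - α k) * u k + β k) {ε : ℝ} (hε : 0 < ε) :
    ∀ᶠ k in atTop, u k ≤ ε := by
  have htail : ∀ᶠ K in atTop, ∑' k, β (k + K) < ε / 2 :=
    (tendsto_sum_nat_add β).eventually (eventually_lt_nhds (half_pos hε))
  obtain ⟨K, huK, htailK⟩ :=
    ((frequently_le_of_le_one_sub_mul_add hα0 hα hβ hrec (half_pos hε)).and_eventually htail).exists
  filter_upwards [eventually_ge_atTop K] with m hm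
  have := le_max_add_sum_Ico_of_le_one_sub_mul_add hα0 hα1 hβ0 hrec hm
  have := sum_Ico_le_tsum_nat_add hβ0 hβ K m
  have : max (u K) 0 ≤ ε / 2 := max_le huK (half_pos hε).le
  linarith

end Recursion

section Smooth

variable {E : Type*} [NormedAddCommGroup E] [InnerProductSpace ℝ E] [CompleteSpace E]
  {f : E → ℝ} {s : Set E}

lemma hasDerivAt_comp_lineMap_s3 (x y : E) {t : ℝ} (hf : DifferentiableAt ℝ f (lineMap x y t)) :
    HasDerivAt (fun r => f (lineMap x y r)) ⟪gradient f (lineMap x y t), y - x⟫ t := by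
  simpa only [Function.comp_def, InnerProductSpace.toDual_apply_apply] using
    hf.hasGradientAt.hasFDerivAt.comp_hasDerivAt t hasDerivAt_lineMap

lemma ConvexOn.inner_gradient_le_sub_s3 (hf : ConvexOn ℝ s f) {x y : E} (hx : x ∈ s) (hy : y ∈ s)
    (hd : DifferentiableAt ℝ f x) : ⟪gradient f x, y - x⟫ ≤ f y - f x := by
  have hline := hf.comp_affineMap (lineMap x y)
  have h := hline.le_slope_of_hasDerivAt (x := 0) (y := 1) (by simpa using hx) (by simpa using hy)
    zero_lt_one (hasDerivAt_comp_lineMap_s3 x y (by simpa using hd))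
  simpa [slope_def_field] using h

lemma le_add_inner_gradient_add_of_lipschitz_gradient (hs : Convex ℝ s) {L : ℝ}
    (hdiff : ∀ z ∈ s, DifferentiableAt ℝ f z)
    (hLip : ∀ z ∈ s, ∀ w ∈ s, ‖gradient f z - gradient f w‖ ≤ L * ‖z - w‖) {x y : E} (hx : x ∈ s)
    (hy : y ∈ s) : f y ≤ f x + ⟪gradient f x, y - x⟫ + L / 2 * ‖y - x‖ ^ 2 := by
  have hmem : ∀ t ∈ Set.Icc (0 : ℝ) 1, lineMap x y t ∈ s := fun t ht => hs.lineMap_mem hx hy ht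
  have hderiv : ∀ t ∈ Set.Icc (0 : ℝ) 1, HasDerivAt
      (fun r => f (lineMap x y r) - f x - r * ⟪gradient f x, y - x⟫)
      (⟪gradient f (lineMap x y t), y - x⟫ - ⟪gradient f x, y - x⟫) t := fun t ht =>
    ((hasDerivAt_comp_lineMap_s3 x y (hdiff _ (hmem t ht))).sub_const _).sub
      ((hasDerivAt_id t).mul_const _ |>.congr_deriv (one_mul _))
  have hB : ∀ t : ℝ, HasDerivAt (fun r => L / 2 * r ^ 2 * ‖y - x‖ ^ 2) (L * t * ‖y - x‖ ^ 2) t :=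
    fun t => by
      refine (((hasDerivAt_pow 2 t).const_mul (L / 2)).mul_const (‖y - x‖ ^ 2)).congr_deriv ?_
      simp only [Nat.add_one_sub_one, pow_one, Nat.cast_ofNat]
      ring
  have key := image_le_of_deriv_right_le_deriv_boundary (a := 0) (b := 1)
    (fun t ht => (hderiv t ht).continuousAt.continuousWithinAt)
    (fun t ht => (hderiv t (Set.Ico_subset_Icc_self ht)).hasDerivWithinAt) (by simp)
    (fun t _ => (hB t).continuousAt.continuousWithinAt) (fun t _ => (hB t).hasDerivWithinAt)
    (fun t ht => ?_) (Set.right_mem_Icc.2 zero_le_one)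
  · simp only [lineMap_apply_one, one_mul, one_pow] at key
    linarith
  · have hdist : ‖lineMap x y t - x‖ = t * ‖y - x‖ := by
      rw [lineMap_apply_module', add_sub_cancel_right, norm_smul, Real.norm_of_nonneg ht.1]
    calc ⟪gradient f (lineMap x y t), y - x⟫ - ⟪gradient f x, y - x⟫
        = ⟪gradient f (lineMap x y t) - gradient f x, y - x⟫ := (inner_sub_left _ _ _).symm
      _ ≤ ‖gradient f (lineMap x y t) - gradient f x‖ * ‖y - x‖ := real_inner_le_norm _ _
      _ ≤ L * ‖lineMap x y t - x‖ * ‖y - x‖ := by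
        gcongr; exact hLip _ (hmem t (Set.Ico_subset_Icc_self ht)) x hx
      _ = L * t * ‖y - x‖ ^ 2 := by rw [hdist]; ring

end Smooth

section FrankWolfe

variable {E : Type*} [NormedAddCommGroup E] [InnerProductSpace ℝ E] [CompleteSpace E]
  {f : E → ℝ} {Q : Set E} {δ : ℝ} {x xt xs g : E}

-- The oracle error is paid twice: once at `xt` and once at `xs`.
lemma inner_gradient_sub_le_of_oracle (hconv : ConvexOn ℝ Q f) (hx : x ∈ Q) (hxt : xt ∈ Q)
    (hxs : xs ∈ Q) (hd : DifferentiableAt ℝ f x)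
    (hg : ∀ y ∈ Q, |⟪g - gradient f x, x - y⟫| ≤ δ) (hmin : ⟪g, xt - x⟫ ≤ ⟪g, xs - x⟫) :
    ⟪gradient f x, xt - x⟫ ≤ f xs - f x + 2 * δ := by
  have hxt' := (abs_le.1 (hg xt hxt)).2
  have hxs' := (abs_le.1 (hg xs hxs)).1
  have hcvx := hconv.inner_gradient_le_sub_s3 hx hxs hd
  simp only [inner_sub_left, inner_sub_right] at hxt' hxs' hmin hcvx ⊢
  linarith

lemma frankWolfe_step_le (hQ : Convex ℝ Q) (hQb : Bornology.IsBounded Q)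
    (hconv : ConvexOn ℝ Q f) (hdiff : ∀ z ∈ Q, DifferentiableAt ℝ f z) {L : ℝ}
    (hLip : ∀ z ∈ Q, ∀ w ∈ Q, ‖gradient f z - gradient f w‖ ≤ L * ‖z - w‖)
    (hx : x ∈ Q) (hxt : xt ∈ Q) (hxs : xs ∈ Q)
    (hg : ∀ y ∈ Q, |⟪g - gradient f x, x - y⟫| ≤ δ) (hmin : ⟪g, xt - x⟫ ≤ ⟪g, xs - x⟫)
    {a : ℝ} (ha : a ∈ Set.Icc (0 : ℝ) 1) :
    f (x + a • (xt - x)) - f xs - 2 * δ ≤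
      (1 - a) * (f x - f xs - 2 * δ) + |L| / 2 * Metric.diam Q ^ 2 * a ^ 2 := by
  have hdesc := le_add_inner_gradient_add_of_lipschitz_gradient hQ hdiff hLip hx
    (hQ.add_smul_sub_mem hx hxt ha)
  have hgap := inner_gradient_sub_le_of_oracle hconv hx hxt hxs (hdiff x hx) hg hmin
  rw [add_sub_cancel_left, inner_smul_right, norm_smul, Real.norm_of_nonneg ha.1] at hdesc
  have hdiam : ‖xt - x‖ ≤ Metric.diam Q := by
    simpa [dist_eq_norm] using Metric.dist_le_diam_of_mem hQb hxt hx
  have hquad : L / 2 * (a * ‖xt - x‖) ^ 2 ≤ |L| / 2 * Metric.diam Q ^ 2 * a ^ 2 :=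
    calc L / 2 * (a * ‖xt - x‖) ^ 2 ≤ |L| / 2 * (a * Metric.diam Q) ^ 2 := by
          have := mul_nonneg ha.1 (norm_nonneg (xt - x))
          gcongr
          · exact le_abs_self L
          · exact ha.1
      _ = |L| / 2 * Metric.diam Q ^ 2 * a ^ 2 := by ring
  nlinarith [mul_le_mul_of_nonneg_left hgap ha.1]

end FrankWolfe

theorem frankWolfe_delta_oracle_nonaccumulation_general {d : ℕ}
    (Q : Set (EuclideanSpace ℝ (Fin d)))
    (hQne : Q.Nonempty) (hQcomp : IsCompact Q) (hQconv : Convex ℝ Q)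
    (f : EuclideanSpace ℝ (Fin d) → ℝ) (L δ : ℝ)
    (hconv : ConvexOn ℝ Q f)
    (hdiff : ∀ x ∈ Q, DifferentiableAt ℝ f x)
    (hLip : ∀ x ∈ Q, ∀ y ∈ Q, ‖gradient f x - gradient f y‖ ≤ L * ‖x - y‖)
    (x xt g : ℕ → EuclideanSpace ℝ (Fin d)) (α : ℕ → ℝ)
    (hα : ∀ k, α k ∈ Set.Ico (0 : ℝ) 1)
    (hdiv : ¬ Summable α)
    (hsq : Summable (fun k => (α k) ^ 2))
    (hx0 : x 0 ∈ Q)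
    (horacle : ∀ k, ∀ y ∈ Q, |⟪g k - gradient f (x k), x k - y⟫| ≤ δ)
    (hxtQ : ∀ k, xt k ∈ Q)
    (hmin : ∀ k, ∀ y ∈ Q, ⟪g k, xt k - x k⟫ ≤ ⟪g k, y - x k⟫)
    (hupd : ∀ k, x (k + 1) = x k + α k • (xt k - x k)) :
    Filter.limsup (fun k => f (x k) - sInf (f '' Q)) Filter.atTop ≤ 2 * δ := by
  have hαI : ∀ k, α k ∈ Set.Icc (0 : ℝ) 1 := fun k => Set.Ico_subset_Icc_self (hα k)
  have hxQ : ∀ k, x k ∈ Q := fun k => by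
    induction k with
    | zero => exact hx0
    | succ k ih => rw [hupd k]; exact hQconv.add_smul_sub_mem ih (hxtQ k) (hαI k)
  obtain ⟨xs, hxs, hxsmin⟩ :=
    hQcomp.exists_isMinOn hQne fun z hz => (hdiff z hz).continuousAt.continuousWithinAt
  have hfstar : sInf (f '' Q) = f xs :=
    IsLeast.csInf_eq ⟨Set.mem_image_of_mem f hxs, Set.forall_mem_image.2 fun z hz => hxsmin hz⟩
  have hrec : ∀ k, f (x (k + 1)) - f xs - 2 * δ ≤
      (1 - α k) * (f (x k) - f xs - 2 * δ) + |L| / 2 * Metric.diam Q ^ 2 * α k ^ 2 := fun k =>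
    hupd k ▸ frankWolfe_step_le hQconv hQcomp.isBounded hconv hdiff hLip (hxQ k) (hxtQ k) hxs
      (horacle k) (hmin k xs hxs) (hαI k)
  rw [hfstar]
  refine le_of_forall_pos_le_add fun ε hε => limsup_le_of_le
    (isCoboundedUnder_le_of_le _ fun k => sub_nonneg.2 (hxsmin (hxQ k))) ?_
  filter_upwards [eventually_le_of_le_one_sub_mul_add (u := fun k => f (x k) - f xs - 2 * δ)
    (fun k => (hα k).1) (fun k => (hαI k).2) hdiv (fun k => by positivity) (hsq.mul_left _)
    hrec hε] with k hk
  linarith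

/-- Theorem 2.3 (nonaccumulation under a δ-oracle, convex case): with step
sizes satisfying `Σ ᾱ_k = ∞` and `Σ ᾱ_k² < ∞`, Frank–Wolfe with a δ-oracle
satisfies `limsup_k (f(x_k) - f*) ≤ 2δ`. -/
theorem frankWolfe_delta_oracle_nonaccumulation {d : ℕ}
    (Q : Set (EuclideanSpace ℝ (Fin d)))
    (hQne : Q.Nonempty) (hQcomp : IsCompact Q) (hQconv : Convex ℝ Q)
    (f : EuclideanSpace ℝ (Fin d) → ℝ) (L δ : ℝ) (hδ : 0 ≤ δ)
    (hconv : ConvexOn ℝ Q f)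
    (hdiff : ∀ x ∈ Q, DifferentiableAt ℝ f x)
    (hLip : ∀ x ∈ Q, ∀ y ∈ Q, ‖gradient f x - gradient f y‖ ≤ L * ‖x - y‖)
    (x xt g : ℕ → EuclideanSpace ℝ (Fin d)) (α : ℕ → ℝ)
    (hα : ∀ k, α k ∈ Set.Ico (0 : ℝ) 1)
    (hdiv : ¬ Summable α)
    (hsq : Summable (fun k => (α k) ^ 2))
    (hx0 : x 0 ∈ Q)
    (horacle : ∀ k, ∀ y ∈ Q, |⟪g k - gradient f (x k), x k - y⟫| ≤ δ)
    (hxtQ : ∀ k, xt k ∈ Q)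
    (hmin : ∀ k, ∀ y ∈ Q, ⟪g k, xt k - x k⟫ ≤ ⟪g k, y - x k⟫)
    (hupd : ∀ k, x (k + 1) = x k + α k • (xt k - x k)) :
    Filter.limsup (fun k => f (x k) - sInf (f '' Q)) Filter.atTop ≤ 2 * δ :=
  frankWolfe_delta_oracle_nonaccumulation_general Q hQne hQcomp hQconv f L δ hconv hdiff hLip x xt g
    α hα hdiv hsq hx0 horacle hxtQ hmin hupd
end

section
/- Let {ᾱ_k}_{k≥0} ⊂ [0,1) satisfy Σ_{k=0}^∞ ᾱ_k = ∞ and Σ_{k=0}^∞ ᾱ_k² < ∞, and define β_k = 1 / ∏_{j=0}^{k−1} (1 − ᾱ_j) (with β_0 = 1). Then limsup_{k→∞} (Σ_{j=0}^k ᾱ_j² β_{j+1}) / β_{k+1} = 0, i.e. the weighted averages (Σ_{j=0}^k ᾱ_j² β_{j+1}) / β_{k+1} converge to 0 as k → ∞. -/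
/-!
Writing `β_k` for the inverse products, `β_{j+1} - β_j = ᾱ_j β_{j+1}`, so the numerator equals
`∑_{j ≤ k} ᾱ_j (β_{j+1} - β_j)`: up to the factor `(β_{k+1} - 1) / β_{k+1} ≤ 1` the quotient is a
weighted average of `ᾱ_0, …, ᾱ_k` with weights `β_{j+1} - β_j ≥ 0`. Since `ᾱ_j → 0` (from
`∑ ᾱ_j² < ∞`) and the total weight `β_{k+1} - 1 ≥ ∑_{j ≤ k} ᾱ_j` tends to infinity, these averages
tend to `0` (Stolz–Cesàro).
-/

open Filter Finset Asymptotics Topology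

theorem tendsto_sum_mul_sub_div_of_tendsto_zero {a b : ℕ → ℝ} (ha : Tendsto a atTop (𝓝 0))
    (hb : Monotone b) (hb_top : Tendsto b atTop atTop) :
    Tendsto (fun n => (∑ j ∈ range n, a j * (b (j + 1) - b j)) / b n) atTop (𝓝 0) := by
  have hlo : (fun j => a j * (b (j + 1) - b j)) =o[atTop] fun j => b (j + 1) - b j := by
    simpa only [one_mul] using ((isLittleO_one_iff ℝ).2 ha).mul_isBigO (isBigO_refl _ _)
  have hsum : (fun n => ∑ j ∈ range n, a j * (b (j + 1) - b j)) =o[atTop] fun n => b n - b 0 := by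
    simpa only [sum_range_sub] using hlo.sum_range (fun j => sub_nonneg.2 (hb j.le_succ))
      (by simpa only [sum_range_sub, ← sub_eq_add_neg] using
        tendsto_atTop_add_const_right _ (-b 0) hb_top)
  have hb_sub : (fun n => b n - b 0) =O[atTop] b :=
    (isBigO_refl _ _).sub
      (isLittleO_const_left.2 (.inr (tendsto_norm_atTop_atTop.comp hb_top))).isBigO
  exact (hsum.trans_isBigO hb_sub).tendsto_div_nhds_zero

theorem tendsto_zero_of_summable_sq {f : ℕ → ℝ} (hf : Summable fun k => f k ^ 2) :
    Tendsto f atTop (𝓝 0) := by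
  have := (Real.continuous_sqrt.tendsto' 0 0 Real.sqrt_zero).comp hf.tendsto_atTop_zero
  simp only [Function.comp_def, Real.sqrt_sq_eq_abs] at this
  exact (tendsto_zero_iff_abs_tendsto_zero f).2 this

section InvProdOneSub

variable {α : ℕ → ℝ}

theorem inv_prod_range_succ_one_sub_sub (k : ℕ) (hk : α k ≠ 1) :
    (∏ j ∈ range (k + 1), (1 - α j))⁻¹ - (∏ j ∈ range k, (1 - α j))⁻¹
      = α k * (∏ j ∈ range (k + 1), (1 - α j))⁻¹ := by
  have : 1 - α k ≠ 0 := sub_ne_zero.2 hk.symm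
  rw [prod_range_succ, mul_inv]
  field_simp
  ring

variable (h0 : ∀ j, 0 ≤ α j) (h1 : ∀ j, α j < 1)
include h0 h1

theorem one_le_inv_prod_range_one_sub (k : ℕ) : 1 ≤ (∏ j ∈ range k, (1 - α j))⁻¹ :=
  one_le_inv₀ (prod_pos fun j _ => sub_pos.2 (h1 j)) |>.2
    (prod_le_one (fun j _ => (sub_pos.2 (h1 j)).le) fun j _ => sub_le_self _ (h0 j))

theorem monotone_inv_prod_range_one_sub : Monotone fun k => (∏ j ∈ range k, (1 - α j))⁻¹ :=
  monotone_nat_of_le_succ fun k => sub_nonneg.1 <| by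
    rw [inv_prod_range_succ_one_sub_sub k (h1 k).ne]
    exact mul_nonneg (h0 k) (zero_le_one.trans (one_le_inv_prod_range_one_sub h0 h1 _))

theorem sum_range_le_inv_prod_range_one_sub_sub_one (k : ℕ) :
    ∑ j ∈ range k, α j ≤ (∏ j ∈ range k, (1 - α j))⁻¹ - 1 := by
  have := sum_range_sub (fun k => (∏ j ∈ range k, (1 - α j))⁻¹) k
  simp only [inv_prod_range_succ_one_sub_sub _ (h1 _).ne, prod_range_zero, inv_one] at this
  rw [← this]
  exact sum_le_sum fun j _ => le_mul_of_one_le_right (h0 j) (one_le_inv_prod_range_one_sub h0 h1 _)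

theorem tendsto_inv_prod_range_one_sub_atTop (hdiv : ¬ Summable α) :
    Tendsto (fun k => (∏ j ∈ range k, (1 - α j))⁻¹) atTop atTop :=
  tendsto_atTop_mono (fun k => by linarith [sum_range_le_inv_prod_range_one_sub_sub_one h0 h1 k])
    (tendsto_atTop_add_const_right _ 1 ((not_summable_iff_tendsto_nat_atTop_of_nonneg h0).1 hdiv))

end InvProdOneSub

/-- The weighted-average lemma used in the proof of the convex nonaccumulation
theorem: if `ᾱ_k ∈ [0,1)` with `Σ ᾱ_k = ∞` and `Σ ᾱ_k² < ∞`, and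
`β_k = 1 / ∏_{j<k} (1 - ᾱ_j)`, then `(Σ_{j=0}^k ᾱ_j² β_{j+1}) / β_{k+1} → 0`. -/
theorem weighted_average_stepsize_tendsto_zero
    (α : ℕ → ℝ) (hα : ∀ k, α k ∈ Set.Ico (0 : ℝ) 1)
    (hdiv : ¬ Summable α)
    (hsq : Summable (fun k => (α k) ^ 2))
    (β : ℕ → ℝ)
    (hβ : ∀ k, β k = (∏ j ∈ Finset.range k, (1 - α j))⁻¹) :
    Filter.Tendsto
      (fun k => (∑ j ∈ Finset.range (k + 1), (α j) ^ 2 * β (j + 1)) / β (k + 1))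
      Filter.atTop (nhds 0) := by
  obtain rfl : β = fun k => (∏ j ∈ range k, (1 - α j))⁻¹ := funext hβ
  have h0 k : 0 ≤ α k := (hα k).1
  have h1 k : α k < 1 := (hα k).2
  have := (tendsto_sum_mul_sub_div_of_tendsto_zero (tendsto_zero_of_summable_sq hsq)
    (monotone_inv_prod_range_one_sub h0 h1) (tendsto_inv_prod_range_one_sub_atTop h0 h1 hdiv)).comp
    (tendsto_add_atTop_nat 1)
  refine this.congr fun k => ?_
  simp only [Function.comp_apply, inv_prod_range_succ_one_sub_sub _ (h1 _).ne, ← mul_assoc, sq]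
end

section
/- Let S ⊂ ℝ^d be a nonempty compact convex set with diameter D, let f : ℝ^d → ℝ have L-Lipschitz gradient on S with G := sup_{x∈S} ‖∇f(x)‖ < ∞, and let C ≥ max{L D², G D}. Let δ ≥ 0 and let g_δ(x^k) satisfy |⟨∇f(x^k) − g_δ(x^k), s − x^k⟩| ≤ δ for all s ∈ S. Set s^k ∈ argmin_{s ∈ S} ⟨g_δ(x^k), s − x^k⟩, g̃_k = ⟨g_δ(x^k), x^k − s^k⟩, ᾱ_k = max{g̃_k − δ, 0}/C, and x^{k+1} = x^k + ᾱ_k (s^k − x^k). Then f(x^{k+1}) ≤ f(x^k) − (max{g̃_k − δ, 0})² / (2C). -/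
/-!
Along the segment from `x` to `s`, a gradient that is `L`-Lipschitz on `S` gives the quadratic
upper model `f (x + α • (s - x)) ≤ f x + α ⟪∇f x, s - x⟫ + L ‖s - x‖² α² / 2` for `α ∈ [0, 1]`.
The oracle bound makes the linear coefficient at most `-(g̃ - δ)`, while `C` dominates both
`L D²` and `G D`; hence the clipped step `(g̃ - δ)₊ / C` lies in `[0, 1]`, and there the model
decreases `f` by at least `(g̃ - δ)₊² / (2C)`.
-/

open RealInnerProductSpace Set Metric

section Descent

variable {E : Type*} [NormedAddCommGroup E] [InnerProductSpace ℝ E] [CompleteSpace E]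
  {f : E → ℝ} {S : Set E} {L : ℝ} {x y : E}

theorem hasDerivAt_comp_add_smul {v : E} {t : ℝ} (hf : DifferentiableAt ℝ f (x + t • v)) :
    HasDerivAt (fun t : ℝ => f (x + t • v)) ⟪gradient f (x + t • v), v⟫ t := by
  have hline : HasDerivAt (fun t : ℝ => x + t • v) v t :=
    ((hasDerivAt_id t).smul_const v).const_add x |>.congr_deriv (one_smul ℝ v)
  simpa [Function.comp_def] using hf.hasGradientAt.hasFDerivAt.comp_hasDerivAt t hline

theorem inner_gradient_add_smul_sub_le
    (hLip : ∀ x ∈ S, ∀ y ∈ S, ‖gradient f x - gradient f y‖ ≤ L * ‖x - y‖)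
    (hx : x ∈ S) {t : ℝ} (ht : 0 ≤ t) (hxt : x + t • (y - x) ∈ S) :
    ⟪gradient f (x + t • (y - x)), y - x⟫ ≤ ⟪gradient f x, y - x⟫ + L * ‖y - x‖ ^ 2 * t :=
  calc ⟪gradient f (x + t • (y - x)), y - x⟫
      = ⟪gradient f x, y - x⟫ + ⟪gradient f (x + t • (y - x)) - gradient f x, y - x⟫ := by
        rw [inner_sub_left]; ring
    _ ≤ ⟪gradient f x, y - x⟫ + L * ‖(x + t • (y - x)) - x‖ * ‖y - x‖ := by
        gcongr
        exact (real_inner_le_norm _ _).trans (by gcongr; exact hLip _ hxt _ hx)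
    _ = ⟪gradient f x, y - x⟫ + L * ‖y - x‖ ^ 2 * t := by
        rw [add_sub_cancel_left, norm_smul, Real.norm_of_nonneg ht]; ring

theorem Convex.descent_lemma (hS : Convex ℝ S) (hdiff : ∀ x ∈ S, DifferentiableAt ℝ f x)
    (hLip : ∀ x ∈ S, ∀ y ∈ S, ‖gradient f x - gradient f y‖ ≤ L * ‖x - y‖)
    (hx : x ∈ S) (hy : y ∈ S) {α : ℝ} (hα : α ∈ Icc (0 : ℝ) 1) :
    f (x + α • (y - x)) ≤ f x + α * ⟪gradient f x, y - x⟫ + L * ‖y - x‖ ^ 2 * α ^ 2 / 2 := by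
  have hmem : ∀ t ∈ Icc (0 : ℝ) 1, x + t • (y - x) ∈ S := fun _ ht =>
    hS.add_smul_sub_mem hx hy ht
  have hderiv : ∀ t ∈ Icc (0 : ℝ) 1, HasDerivAt (fun t : ℝ => f (x + t • (y - x)))
      ⟪gradient f (x + t • (y - x)), y - x⟫ t := fun t ht =>
    hasDerivAt_comp_add_smul (hdiff _ (hmem t ht))
  have hmodel : ∀ t, HasDerivAt
      (fun t : ℝ => f x + t * ⟪gradient f x, y - x⟫ + L * ‖y - x‖ ^ 2 * t ^ 2 / 2)
      (⟪gradient f x, y - x⟫ + L * ‖y - x‖ ^ 2 * t) t := fun t => by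
    refine ((((hasDerivAt_id t).mul_const ⟪gradient f x, y - x⟫).const_add (f x)).add
      (((hasDerivAt_pow 2 t).const_mul (L * ‖y - x‖ ^ 2)).div_const 2)).congr_deriv ?_
    norm_num; ring
  refine image_le_of_deriv_right_le_deriv_boundary (a := 0) (b := 1)
    (fun t ht => (hderiv t ht).continuousAt.continuousWithinAt)
    (fun t ht => (hderiv t (Ico_subset_Icc_self ht)).hasDerivWithinAt) (by simp)
    (fun t _ => (hmodel t).continuousAt.continuousWithinAt)
    (fun t _ => (hmodel t).hasDerivWithinAt) (fun t ht => ?_) hα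
  exact inner_gradient_add_smul_sub_le hLip hx ht.1 (hmem t (Ico_subset_Icc_self ht))

end Descent

/- `sSup` of a set of reals that is not bounded above is `0`; the Lipschitz bound on the bounded
set `S` is what rules this out. -/
theorem norm_le_sSup_norm_image_of_lipschitz {E F : Type*} [SeminormedAddCommGroup E]
    [SeminormedAddCommGroup F] {S : Set E} (hS : Bornology.IsBounded S) {φ : E → F} {L : ℝ}
    (hφ : ∀ x ∈ S, ∀ y ∈ S, ‖φ x - φ y‖ ≤ L * ‖x - y‖) {x : E} (hx : x ∈ S) :
    ‖φ x‖ ≤ sSup ((fun y => ‖φ y‖) '' S) := by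
  refine le_csSup ⟨‖φ x‖ + |L| * diam S, ?_⟩ ⟨x, hx, rfl⟩
  rintro _ ⟨y, hy, rfl⟩
  have hyx : ‖y - x‖ ≤ diam S := by rw [← dist_eq_norm]; exact dist_le_diam_of_mem hS hy hx
  calc ‖φ y‖ ≤ ‖φ x‖ + ‖φ y - φ x‖ := norm_le_norm_add_norm_sub' _ _
    _ ≤ ‖φ x‖ + |L| * diam S := by
      gcongr
      exact (hφ y hy x hx).trans (by gcongr; exacts [le_abs_self L])

theorem quadratic_model_clipped_step_le {r C a b : ℝ} (hC : 0 ≤ C) (ha : a ≤ -r) (hb : b ≤ C) :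
    max r 0 / C * a + b * (max r 0 / C) ^ 2 / 2 ≤ -(max r 0 ^ 2 / (2 * C)) := by
  rcases le_total r 0 with hr | hr
  · simp [max_eq_right hr]
  rw [max_eq_left hr]
  rcases hC.eq_or_lt with rfl | hC
  · simp
  calc r / C * a + b * (r / C) ^ 2 / 2 ≤ r / C * (-r) + C * (r / C) ^ 2 / 2 := by gcongr
    _ = -(r ^ 2 / (2 * C)) := by field_simp; ring

theorem nonconvex_fw_delta_oracle_one_step_decrease_general {d : ℕ}
    (S : Set (EuclideanSpace ℝ (Fin d)))
    (hScomp : IsCompact S) (hSconv : Convex ℝ S)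
    (f : EuclideanSpace ℝ (Fin d) → ℝ) (L C δ : ℝ)
    (hdiff : ∀ x ∈ S, DifferentiableAt ℝ f x)
    (hLip : ∀ x ∈ S, ∀ y ∈ S, ‖gradient f x - gradient f y‖ ≤ L * ‖x - y‖)
    (hC : C ≥ max (L * (Metric.diam S) ^ 2)
      (sSup ((fun x => ‖gradient f x‖) '' S) * Metric.diam S))
    (x s : EuclideanSpace ℝ (Fin d)) (hx : x ∈ S) (hs : s ∈ S)
    (g : EuclideanSpace ℝ (Fin d))
    (horacle : ∀ t ∈ S, |⟪gradient f x - g, t - x⟫| ≤ δ) :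
    f (x + (max (⟪g, x - s⟫ - δ) 0 / C) • (s - x)) ≤
      f x - (max (⟪g, x - s⟫ - δ) 0) ^ 2 / (2 * C) := by
  have hsx : ‖s - x‖ ≤ diam S := by
    rw [← dist_eq_norm]; exact dist_le_diam_of_mem hScomp.isBounded hs hx
  have hGD : ‖gradient f x‖ * ‖s - x‖ ≤ C := by
    have hG := norm_le_sSup_norm_image_of_lipschitz hScomp.isBounded hLip hx
    exact (mul_le_mul hG hsx (norm_nonneg _) ((norm_nonneg _).trans hG)).trans
      ((le_max_right _ _).trans hC)
  have hC0 : 0 ≤ C := (mul_nonneg (norm_nonneg _) (norm_nonneg _)).trans hGD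
  have hdir : ⟪gradient f x, s - x⟫ ≤ -(⟪g, x - s⟫ - δ) := by
    have hs' := (abs_le.mp (horacle s hs)).2
    rw [inner_sub_left] at hs'
    rw [← neg_sub s x, inner_neg_right]
    linarith
  have hstep : max (⟪g, x - s⟫ - δ) 0 / C ∈ Icc (0 : ℝ) 1 := by
    refine ⟨div_nonneg (le_max_right _ _) hC0, div_le_one_of_le₀ (max_le ?_ hC0) hC0⟩
    linarith [(abs_le.mp (abs_real_inner_le_norm (gradient f x) (s - x))).1]
  have hcurv : L * ‖s - x‖ ^ 2 ≤ C := by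
    rcases le_total 0 L with hL | hL
    · exact (mul_le_mul_of_nonneg_left (pow_le_pow_left₀ (norm_nonneg _) hsx 2) hL).trans
        ((le_max_left _ _).trans hC)
    · exact (mul_nonpos_of_nonpos_of_nonneg hL (sq_nonneg _)).trans hC0
  have hdescent := hSconv.descent_lemma hdiff hLip hx hs hstep
  linarith [quadratic_model_clipped_step_le hC0 hdir hcurv]

/-- Lemma 3.1 (one-step decrease of nonconvex Frank–Wolfe with a δ-oracle):
with stepsize `ᾱ = (g̃ - δ)₊ / C`, one step decreases `f` by at least
`(g̃ - δ)₊² / (2C)`. -/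
theorem nonconvex_fw_delta_oracle_one_step_decrease {d : ℕ}
    (S : Set (EuclideanSpace ℝ (Fin d)))
    (hSne : S.Nonempty) (hScomp : IsCompact S) (hSconv : Convex ℝ S)
    (f : EuclideanSpace ℝ (Fin d) → ℝ) (L C δ : ℝ) (hδ : 0 ≤ δ)
    (hdiff : ∀ x ∈ S, DifferentiableAt ℝ f x)
    (hLip : ∀ x ∈ S, ∀ y ∈ S, ‖gradient f x - gradient f y‖ ≤ L * ‖x - y‖)
    (hC : C ≥ max (L * (Metric.diam S) ^ 2)
      (sSup ((fun x => ‖gradient f x‖) '' S) * Metric.diam S))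
    (x s : EuclideanSpace ℝ (Fin d)) (hx : x ∈ S) (hs : s ∈ S)
    (g : EuclideanSpace ℝ (Fin d))
    (horacle : ∀ t ∈ S, |⟪gradient f x - g, t - x⟫| ≤ δ)
    (hmin : ∀ t ∈ S, ⟪g, s - x⟫ ≤ ⟪g, t - x⟫) :
    f (x + (max (⟪g, x - s⟫ - δ) 0 / C) • (s - x)) ≤
      f x - (max (⟪g, x - s⟫ - δ) 0) ^ 2 / (2 * C) :=
  nonconvex_fw_delta_oracle_one_step_decrease_general S hScomp hSconv f L C δ hdiff hLip hC x s hx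
    hs g horacle
end

section
/- Under the hypotheses of the nonconvex Frank–Wolfe theorem with a δ-oracle (S compact convex of diameter D, f with L-Lipschitz gradient, C ≥ max{L D², G D}, iterates x^{k+1} = x^k + (max{g̃_k − δ, 0}/C)(s^k − x^k)), for any ε > 2δ, if K + 1 ≥ 2C (f(x^0) − f*)/(ε − 2δ)², then min_{0 ≤ k ≤ K} G(x^k) ≤ ε, where G(x) = max_{s ∈ S} ⟨∇f(x), x − s⟩ and f* = inf_{x∈S} f(x). -/
/-! The descent lemma `f y ≤ f x + ⟪∇f x, y - x⟫ + L/2 ‖y - x‖²` turns the step with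
`m_k = max (g̃_k - δ) 0` into the sufficient decrease `m_k² ≤ 2C (f(x^k) - f(x^{k+1}))`, while
`C ≥ G D` keeps the step size `m_k / C` in `[0, 1]`, so that the iterates stay in `S`.
Summing, `∑_{k ≤ K} m_k² ≤ 2C (f(x⁰) - f*) ≤ (K + 1)(ε - 2δ)²`, so `m_k ≤ ε - 2δ` for some `k ≤ K`,
and the oracle error bounds the Frank–Wolfe gap at `x^k` by `g̃_k + δ ≤ m_k + 2δ ≤ ε`. -/

open RealInnerProductSpace Finset

theorem Convex.iterate_add_smul_sub_mem {E : Type*} [AddCommGroup E] [Module ℝ E] {S : Set E}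
    (hS : Convex ℝ S) {x s : ℕ → E} {γ : ℕ → ℝ} (hx0 : x 0 ∈ S) (hs : ∀ k, s k ∈ S)
    (hγ : ∀ k, x k ∈ S → γ k ∈ Set.Icc (0 : ℝ) 1)
    (hupd : ∀ k, x (k + 1) = x k + γ k • (s k - x k)) (k : ℕ) : x k ∈ S := by
  induction k with
  | zero => exact hx0
  | succ k ih => exact hupd k ▸ hS.add_smul_sub_mem ih (hs k) (hγ k ih)

section Normed

variable {E F : Type*} [SeminormedAddCommGroup E] [SeminormedAddCommGroup F] {S : Set E} {L : ℝ}

theorem continuousOn_of_norm_sub_le_mul {φ : E → F}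
    (h : ∀ x ∈ S, ∀ y ∈ S, ‖φ x - φ y‖ ≤ L * ‖x - y‖) : ContinuousOn φ S := by
  refine (LipschitzOnWith.of_dist_le_mul (K := L.toNNReal) fun x hx y hy => ?_).continuousOn
  rw [dist_eq_norm, dist_eq_norm]
  exact (h x hx y hy).trans (mul_le_mul_of_nonneg_right (Real.le_coe_toNNReal L) (norm_nonneg _))

theorem mul_norm_sub_sq_le_max_mul_diam_sq (hS : Bornology.IsBounded S) (L : ℝ) {a b : E}
    (ha : a ∈ S) (hb : b ∈ S) : L * ‖a - b‖ ^ 2 ≤ max (L * Metric.diam S ^ 2) 0 := by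
  rcases le_total 0 L with hL | hL
  · have hab : ‖a - b‖ ≤ Metric.diam S := by
      rw [← dist_eq_norm]; exact Metric.dist_le_diam_of_mem hS ha hb
    exact le_max_of_le_left (by gcongr)
  · exact le_max_of_le_right (mul_nonpos_of_nonpos_of_nonneg hL (sq_nonneg _))

end Normed

section InnerProduct

variable {E : Type*} [NormedAddCommGroup E] [InnerProductSpace ℝ E] {S : Set E}

theorem abs_inner_sub_inner_sub (a b x t : E) :
    |⟪a, x - t⟫ - ⟪b, x - t⟫| = |⟪a - b, t - x⟫| := by
  rw [← inner_sub_left, ← neg_sub t x, inner_neg_right, abs_neg]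

theorem inner_sub_le_sSup_norm_mul_diam {φ : E → E} (hS : Bornology.IsBounded S)
    (hφ : BddAbove ((fun x => ‖φ x‖) '' S)) {x s : E} (hx : x ∈ S) (hs : s ∈ S) :
    ⟪φ x, x - s⟫ ≤ sSup ((fun x => ‖φ x‖) '' S) * Metric.diam S := by
  have hφx : ‖φ x‖ ≤ sSup ((fun x => ‖φ x‖) '' S) := le_csSup hφ ⟨x, hx, rfl⟩
  have hxs : ‖x - s‖ ≤ Metric.diam S := by
    rw [← dist_eq_norm]; exact Metric.dist_le_diam_of_mem hS hx hs
  exact (real_inner_le_norm _ _).trans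
    (mul_le_mul hφx hxs (norm_nonneg _) ((norm_nonneg _).trans hφx))

theorem max_inner_sub_sub_le_max_inner {a g x s : E} {δ : ℝ} (h : |⟪a - g, s - x⟫| ≤ δ) :
    max (⟪g, x - s⟫ - δ) 0 ≤ max ⟪a, x - s⟫ 0 :=
  max_le_max_right 0 <|
    sub_le_comm.1 (abs_sub_le_iff.1 ((abs_inner_sub_inner_sub a g x s).trans_le h)).2

theorem sSup_inner_sub_le_of_forall_inner_le {a g x s : E} {δ : ℝ} (hne : S.Nonempty)
    (hδ : ∀ t ∈ S, |⟪a - g, t - x⟫| ≤ δ) (hmin : ∀ t ∈ S, ⟪g, s - x⟫ ≤ ⟪g, t - x⟫) :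
    sSup ((fun t => ⟪a, x - t⟫) '' S) ≤ ⟪g, x - s⟫ + δ := by
  refine csSup_le (hne.image _) (Set.forall_mem_image.2 fun t ht => ?_)
  have hclose := (abs_sub_le_iff.1 ((abs_inner_sub_inner_sub a g x t).trans_le (hδ t ht))).1
  have hst := hmin t ht
  simp only [inner_sub_right] at hclose hst ⊢
  linarith

end InnerProduct

theorem exists_lt_le_of_sum_range_sq_le {m : ℕ → ℝ} {n : ℕ} {E : ℝ} (hn : 0 < n) (hE : 0 ≤ E)
    (h : ∑ k ∈ range n, m k ^ 2 ≤ n * E ^ 2) : ∃ k < n, m k ≤ E := by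
  by_contra! hlt
  have hgt : (n : ℝ) * E ^ 2 < ∑ k ∈ range n, m k ^ 2 :=
    calc (n : ℝ) * E ^ 2 = ∑ k ∈ range n, E ^ 2 := by simp
      _ < ∑ k ∈ range n, m k ^ 2 := sum_lt_sum_of_nonempty (nonempty_range_iff.2 hn.ne')
          fun k hk => pow_lt_pow_left₀ (hlt k (mem_range.1 hk)) hE two_ne_zero
  exact (hgt.trans_le h).false

theorem exists_le_of_sq_le_two_mul_sub {m u : ℕ → ℝ} {C E b : ℝ} {K : ℕ} (hC : 0 ≤ C)
    (hE : 0 < E) (hdesc : ∀ k, m k ^ 2 ≤ 2 * C * (u k - u (k + 1))) (hb : b ≤ u (K + 1))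
    (hK : (K + 1 : ℝ) ≥ 2 * C * (u 0 - b) / E ^ 2) : ∃ k ≤ K, m k ≤ E := by
  have hsum : ∑ k ∈ range (K + 1), m k ^ 2 ≤ ((K + 1 : ℕ) : ℝ) * E ^ 2 :=
    calc ∑ k ∈ range (K + 1), m k ^ 2
        ≤ 2 * C * u 0 - 2 * C * u (K + 1) :=
          (sum_le_sum fun k _ => (hdesc k).trans_eq (mul_sub _ _ _)).trans_eq
            (sum_range_sub' (fun k => 2 * C * u k) _)
      _ ≤ 2 * C * (u 0 - b) := by rw [← mul_sub]; gcongr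
      _ ≤ ((K + 1 : ℕ) : ℝ) * E ^ 2 := by
          push_cast; exact (div_le_iff₀ (by positivity)).1 hK
  obtain ⟨k, hk, hmk⟩ := exists_lt_le_of_sum_range_sq_le K.succ_pos hE.le hsum
  exact ⟨k, Nat.lt_succ_iff.1 hk, hmk⟩

section Gradient

variable {E : Type*} [NormedAddCommGroup E] [InnerProductSpace ℝ E] [CompleteSpace E]
  {f : E → ℝ} {S : Set E} {L : ℝ}

theorem hasDerivAt_comp_add_smul_of_differentiableAt {x v : E} {t : ℝ}
    (h : DifferentiableAt ℝ f (x + t • v)) :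
    HasDerivAt (fun t : ℝ => f (x + t • v)) ⟪gradient f (x + t • v), v⟫ t := by
  have hline : HasDerivAt (fun t : ℝ => x + t • v) v t := by
    simpa using ((hasDerivAt_id t).smul_const v).const_add x
  have := h.hasGradientAt.hasFDerivAt.comp_hasDerivAt t hline
  rwa [InnerProductSpace.toDual_apply_apply] at this

theorem Convex.le_add_inner_gradient_add_sq (hS : Convex ℝ S)
    (hdiff : ∀ x ∈ S, DifferentiableAt ℝ f x)
    (hLip : ∀ x ∈ S, ∀ y ∈ S, ‖gradient f x - gradient f y‖ ≤ L * ‖x - y‖)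
    {x y : E} (hx : x ∈ S) (hy : y ∈ S) :
    f y ≤ f x + ⟪gradient f x, y - x⟫ + L / 2 * ‖y - x‖ ^ 2 := by
  set v := y - x
  have hmem : ∀ t ∈ Set.Icc (0 : ℝ) 1, x + t • v ∈ S := fun t ht => hS.add_smul_sub_mem hx hy ht
  have hderiv : ∀ t ∈ Set.Icc (0 : ℝ) 1,
      HasDerivAt (fun t : ℝ => f (x + t • v)) ⟪gradient f (x + t • v), v⟫ t :=
    fun t ht => hasDerivAt_comp_add_smul_of_differentiableAt (hdiff _ (hmem t ht))
  have hquad (t : ℝ) :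
      HasDerivAt (fun t : ℝ => f x + t * ⟪gradient f x, v⟫ + L / 2 * ‖v‖ ^ 2 * t ^ 2)
        (⟪gradient f x, v⟫ + L * ‖v‖ ^ 2 * t) t := by
    refine ((((hasDerivAt_id' t).mul_const ⟪gradient f x, v⟫).const_add (f x)).add
      ((hasDerivAt_pow 2 t).const_mul (L / 2 * ‖v‖ ^ 2))).congr_deriv ?_
    ring
  have hslope : ∀ t ∈ Set.Ico (0 : ℝ) 1,
      ⟪gradient f (x + t • v), v⟫ ≤ ⟪gradient f x, v⟫ + L * ‖v‖ ^ 2 * t := by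
    intro t ht
    have hLt := hLip _ (hmem t (Set.Ico_subset_Icc_self ht)) x hx
    calc ⟪gradient f (x + t • v), v⟫
        = ⟪gradient f x, v⟫ + ⟪gradient f (x + t • v) - gradient f x, v⟫ := by
          rw [inner_sub_left]; ring
      _ ≤ ⟪gradient f x, v⟫ + ‖gradient f (x + t • v) - gradient f x‖ * ‖v‖ := by
          gcongr; exact real_inner_le_norm _ _
      _ ≤ ⟪gradient f x, v⟫ + L * ‖x + t • v - x‖ * ‖v‖ := by gcongr
      _ = ⟪gradient f x, v⟫ + L * ‖v‖ ^ 2 * t := by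
          rw [add_sub_cancel_left, norm_smul, Real.norm_of_nonneg ht.1]; ring
  have := image_le_of_deriv_right_le_deriv_boundary
    (fun t ht => (hderiv t ht).continuousAt.continuousWithinAt)
    (fun t ht => (hderiv t (Set.Ico_subset_Icc_self ht)).hasDerivWithinAt)
    (by simp) (fun t _ => (hquad t).continuousAt.continuousWithinAt)
    (fun t _ => (hquad t).hasDerivWithinAt) hslope (Set.right_mem_Icc.2 zero_le_one)
  simpa [v] using this

theorem Convex.sq_le_two_mul_sub_of_step (hS : Convex ℝ S)
    (hdiff : ∀ x ∈ S, DifferentiableAt ℝ f x)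
    (hLip : ∀ x ∈ S, ∀ y ∈ S, ‖gradient f x - gradient f y‖ ≤ L * ‖x - y‖)
    {x s : E} (hx : x ∈ S) (hs : s ∈ S) {m C : ℝ} (hm0 : 0 ≤ m) (hmC : m ≤ C)
    (hm : m ≤ max ⟪gradient f x, x - s⟫ 0) (hLC : L * ‖s - x‖ ^ 2 ≤ C) :
    m ^ 2 ≤ 2 * C * (f x - f (x + (m / C) • (s - x))) := by
  rcases (hm0.trans hmC).eq_or_lt with hC | hC
  · obtain rfl : m = 0 := le_antisymm (hC ▸ hmC) hm0
    simp
  set γ := m / C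
  have hγ : γ ∈ Set.Icc (0 : ℝ) 1 := ⟨div_nonneg hm0 hC.le, div_le_one_of_le₀ hmC hC.le⟩
  have hγC : γ * C = m := div_mul_cancel₀ m hC.ne'
  have hdesc := hS.le_add_inner_gradient_add_sq hdiff hLip hx (hS.add_smul_sub_mem hx hs hγ)
  have hflip : ⟪gradient f x, s - x⟫ = -⟪gradient f x, x - s⟫ := by
    rw [← inner_neg_right, neg_sub]
  rw [add_sub_cancel_left, inner_smul_right, norm_smul, Real.norm_of_nonneg hγ.1, hflip] at hdesc
  have hγm : γ * m ≤ γ * ⟪gradient f x, x - s⟫ := by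
    rcases le_total 0 ⟪gradient f x, x - s⟫ with hpos | hneg
    · exact mul_le_mul_of_nonneg_left (hm.trans_eq (max_eq_left hpos)) hγ.1
    · obtain rfl : m = 0 := le_antisymm (hm.trans_eq (max_eq_right hneg)) hm0
      simp [γ]
  have hLγ : L / 2 * (γ * ‖s - x‖) ^ 2 ≤ C / 2 * γ ^ 2 :=
    calc L / 2 * (γ * ‖s - x‖) ^ 2 = L * ‖s - x‖ ^ 2 / 2 * γ ^ 2 := by ring
      _ ≤ C / 2 * γ ^ 2 := by gcongr
  calc m ^ 2 = 2 * C * (γ * m - C / 2 * γ ^ 2) := by rw [← hγC]; ring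
    _ ≤ 2 * C * (f x - f (x + γ • (s - x))) :=
      mul_le_mul_of_nonneg_left (by linarith) (by linarith)

end Gradient

theorem nonconvex_fw_delta_oracle_complexity_general {d : ℕ}
    (S : Set (EuclideanSpace ℝ (Fin d)))
    (hScomp : IsCompact S) (hSconv : Convex ℝ S)
    (f : EuclideanSpace ℝ (Fin d) → ℝ) (L C δ : ℝ)
    (hdiff : ∀ x ∈ S, DifferentiableAt ℝ f x)
    (hLip : ∀ x ∈ S, ∀ y ∈ S, ‖gradient f x - gradient f y‖ ≤ L * ‖x - y‖)
    (hC : C ≥ max (L * (Metric.diam S) ^ 2)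
      (sSup ((fun x => ‖gradient f x‖) '' S) * Metric.diam S))
    (x s g : ℕ → EuclideanSpace ℝ (Fin d))
    (hx0 : x 0 ∈ S)
    (horacle : ∀ k, ∀ t ∈ S, |⟪gradient f (x k) - g k, t - x k⟫| ≤ δ)
    (hsS : ∀ k, s k ∈ S)
    (hmin : ∀ k, ∀ t ∈ S, ⟪g k, s k - x k⟫ ≤ ⟪g k, t - x k⟫)
    (hupd : ∀ k, x (k + 1) =
      x k + (max (⟪g k, x k - s k⟫ - δ) 0 / C) • (s k - x k))
    (ε : ℝ) (hε : ε > 2 * δ) (K : ℕ)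
    (hK : (K + 1 : ℝ) ≥ 2 * C * (f (x 0) - sInf (f '' S)) / (ε - 2 * δ) ^ 2) :
    ∃ k ≤ K, sSup ((fun t => ⟪gradient f (x k), x k - t⟫) '' S) ≤ ε := by
  set m : ℕ → ℝ := fun k => max (⟪g k, x k - s k⟫ - δ) 0
  have hG : BddAbove ((fun x => ‖gradient f x‖) '' S) := hScomp.bddAbove_image
    (continuous_norm.comp_continuousOn (continuousOn_of_norm_sub_le_mul hLip))
  have hC0 : 0 ≤ C := (mul_nonneg ((norm_nonneg _).trans (le_csSup hG ⟨_, hx0, rfl⟩))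
    Metric.diam_nonneg).trans ((le_max_right _ _).trans hC)
  have hm : ∀ k, m k ≤ max ⟪gradient f (x k), x k - s k⟫ 0 := fun k =>
    max_inner_sub_sub_le_max_inner (horacle k (s k) (hsS k))
  have hmC : ∀ k, x k ∈ S → m k ≤ C := fun k hk => (hm k).trans <| max_le
    ((inner_sub_le_sSup_norm_mul_diam hScomp.isBounded hG hk (hsS k)).trans
      ((le_max_right _ _).trans hC)) hC0
  have hxS : ∀ k, x k ∈ S := hSconv.iterate_add_smul_sub_mem hx0 hsS
    (fun k hk => ⟨div_nonneg (le_max_right _ _) hC0, div_le_one_of_le₀ (hmC k hk) hC0⟩) hupd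
  have hdesc : ∀ k, m k ^ 2 ≤ 2 * C * (f (x k) - f (x (k + 1))) := fun k => by
    rw [hupd k]
    exact hSconv.sq_le_two_mul_sub_of_step hdiff hLip (hxS k) (hsS k) (le_max_right _ _)
      (hmC k (hxS k)) (hm k) <| (mul_norm_sub_sq_le_max_mul_diam_sq hScomp.isBounded L
        (hsS k) (hxS k)).trans (max_le ((le_max_left _ _).trans hC) hC0)
  have hinf : sInf (f '' S) ≤ f (x (K + 1)) := csInf_le (hScomp.bddBelow_image
    fun y hy => (hdiff y hy).continuousAt.continuousWithinAt) ⟨_, hxS (K + 1), rfl⟩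
  obtain ⟨k, hk, hmk⟩ := exists_le_of_sq_le_two_mul_sub hC0 (by linarith) hdesc hinf hK
  have hgap := sSup_inner_sub_le_of_forall_inner_le ⟨_, hxS k⟩ (horacle k) (hmin k)
  exact ⟨k, hk, by linarith [le_max_left (⟪g k, x k - s k⟫ - δ) 0]⟩

/-- Iteration-complexity corollary of the nonconvex Frank–Wolfe theorem with a
δ-oracle: if `ε > 2δ` and `K + 1 ≥ 2C (f(x⁰) - f*)/(ε - 2δ)²`, then some
iterate among `x⁰, …, x^K` has Frank–Wolfe gap at most `ε`. -/
theorem nonconvex_fw_delta_oracle_complexity {d : ℕ}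
    (S : Set (EuclideanSpace ℝ (Fin d)))
    (hSne : S.Nonempty) (hScomp : IsCompact S) (hSconv : Convex ℝ S)
    (f : EuclideanSpace ℝ (Fin d) → ℝ) (L C δ : ℝ) (hδ : 0 ≤ δ)
    (hdiff : ∀ x ∈ S, DifferentiableAt ℝ f x)
    (hLip : ∀ x ∈ S, ∀ y ∈ S, ‖gradient f x - gradient f y‖ ≤ L * ‖x - y‖)
    (hC : C ≥ max (L * (Metric.diam S) ^ 2)
      (sSup ((fun x => ‖gradient f x‖) '' S) * Metric.diam S))
    (x s g : ℕ → EuclideanSpace ℝ (Fin d))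
    (hx0 : x 0 ∈ S)
    (horacle : ∀ k, ∀ t ∈ S, |⟪gradient f (x k) - g k, t - x k⟫| ≤ δ)
    (hsS : ∀ k, s k ∈ S)
    (hmin : ∀ k, ∀ t ∈ S, ⟪g k, s k - x k⟫ ≤ ⟪g k, t - x k⟫)
    (hupd : ∀ k, x (k + 1) =
      x k + (max (⟪g k, x k - s k⟫ - δ) 0 / C) • (s k - x k))
    (ε : ℝ) (hε : ε > 2 * δ) (K : ℕ)
    (hK : (K + 1 : ℝ) ≥ 2 * C * (f (x 0) - sInf (f '' S)) / (ε - 2 * δ) ^ 2) :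
    ∃ k ≤ K, sSup ((fun t => ⟪gradient f (x k), x k - t⟫) '' S) ≤ ε :=
  nonconvex_fw_delta_oracle_complexity_general S hScomp hSconv f L C δ hdiff hLip hC x s g hx0
    horacle hsS hmin hupd ε hε K hK
end

section
/- Let C ⊂ ℝ^d be a nonempty compact convex set with diameter δ_C = sup_{c₁,c₂ ∈ C} ‖c₁ − c₂‖ and radius μ_C = sup_{c ∈ C} ‖c‖, let x ∈ ℝ^d, λ > 0 and K ≥ 0. Let v ∈ argmin_{c ∈ C} ⟨c, x⟩ and let p' ∈ C be a K-approximate projection of −λx onto C, i.e. (1/2)‖p' + λx‖² ≤ min_{c ∈ C} (1/2)‖c + λx‖² + K. Then 0 ≤ ⟨p', x⟩ − ⟨v, x⟩ ≤ (K + (1/2)δ_C² + μ_C δ_C)/λ. -/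
open RealInnerProductSpace

/-- Theorem 5.2 (from `K`-approximate projection to `ε`-approximate LMO): if
`v ∈ LMO_C(x)` and `p'` is a `K`-approximate projection of `-λx` onto `C`,
then `0 ≤ ⟨p', x⟩ - ⟨v, x⟩ ≤ (K + δ_C²/2 + μ_C δ_C)/λ`. -/
theorem kproj_to_lmo_gap_bound {d : ℕ}
    (C : Set (EuclideanSpace ℝ (Fin d)))
    (hCne : C.Nonempty) (hCcomp : IsCompact C) (hCconv : Convex ℝ C)
    (x : EuclideanSpace ℝ (Fin d)) (lam K : ℝ) (hlam : 0 < lam) (hK : 0 ≤ K)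
    (v : EuclideanSpace ℝ (Fin d)) (hv : v ∈ C)
    (hvmin : ∀ c ∈ C, ⟪v, x⟫ ≤ ⟪c, x⟫)
    (p' : EuclideanSpace ℝ (Fin d)) (hp' : p' ∈ C)
    (hproj : (1 / 2) * ‖p' - (-(lam • x))‖ ^ 2 ≤
      sInf ((fun c => (1 / 2) * ‖c - (-(lam • x))‖ ^ 2) '' C) + K) :
    0 ≤ ⟪p', x⟫ - ⟪v, x⟫ ∧
      ⟪p', x⟫ - ⟪v, x⟫ ≤
        (K + (1 / 2) * (Metric.diam C) ^ 2
          + sSup ((fun c => ‖c‖) '' C) * Metric.diam C) / lam := by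
  set μ := sSup ((fun c => ‖c‖) '' C) with hμdef
  set δ := Metric.diam C with hδdef
  have hbdd : Bornology.IsBounded C := hCcomp.isBounded
  -- sInf ≤ value at v
  have hInf : sInf ((fun c => (1 / 2) * ‖c - (-(lam • x))‖ ^ 2) '' C) ≤
      (1 / 2) * ‖v - (-(lam • x))‖ ^ 2 := by
    apply csInf_le
    · refine ⟨0, ?_⟩
      rintro y ⟨c, _, rfl⟩
      positivity
    · exact ⟨v, hv, rfl⟩
  have hkey : (1 / 2) * ‖p' + lam • x‖ ^ 2 ≤ (1 / 2) * ‖v + lam • x‖ ^ 2 + K := by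
    have h1 : p' - (-(lam • x)) = p' + lam • x := by abel
    have h2 : v - (-(lam • x)) = v + lam • x := by abel
    rw [h1] at hproj; rw [h2] at hInf
    linarith
  have expand : ∀ w : EuclideanSpace ℝ (Fin d),
      ‖w + lam • x‖ ^ 2 = ‖w‖ ^ 2 + 2 * (lam * ⟪w, x⟫) + ‖lam • x‖ ^ 2 := by
    intro w
    rw [norm_add_sq_real, real_inner_smul_right]
  rw [expand p', expand v] at hkey
  -- norm bounds
  have hμbdd : BddAbove ((fun c => ‖c‖) '' C) :=
    (hCcomp.image continuous_norm).bddAbove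
  have hμv : ‖v‖ ≤ μ := le_csSup hμbdd ⟨v, hv, rfl⟩
  have hμp : ‖p'‖ ≤ μ := le_csSup hμbdd ⟨p', hp', rfl⟩
  have hδnn : 0 ≤ δ := Metric.diam_nonneg
  have hdist : ‖v - p'‖ ≤ δ := by
    have := Metric.dist_le_diam_of_mem hbdd hv hp'
    simpa [dist_eq_norm] using this
  have hsub : ‖v‖ - ‖p'‖ ≤ δ := le_trans (norm_sub_norm_le _ _) hdist
  have hvn : 0 ≤ ‖v‖ := norm_nonneg _
  have hpn : 0 ≤ ‖p'‖ := norm_nonneg _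
  have hlow : ⟪v, x⟫ ≤ ⟪p', x⟫ := hvmin p' hp'
  constructor
  · linarith
  · rw [le_div_iff₀ hlam]
    nlinarith [sq_nonneg (‖v‖ + ‖p'‖), sq_nonneg δ]
end

section
/- Let C ⊂ ℝ^d be a nonempty compact convex set with diameter δ_C and radius μ_C, let x ∈ ℝ^d, ε > 0, K ≥ 0, and choose λ ≥ (K + (1/2)δ_C² + μ_C δ_C)/ε. If p' ∈ C is a K-approximate projection of −λx onto C, i.e. (1/2)‖p' + λx‖² ≤ min_{c ∈ C} (1/2)‖c + λx‖² + K, then ⟨p', x⟩ ≤ min_{c ∈ C} ⟨c, x⟩ + ε; that is, p' is an ε-accurate linear minimization oracle output for x over C. -/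
/-!
Expanding the squares, the `K`-approximate projection inequality of `p'` against any `c ∈ C`
reads `λ ⟪p' - c, x⟫ ≤ K + (‖c‖² - ‖p'‖²) / 2 ≤ K + μ_C δ_C ≤ λ ε`, and dividing by `λ` gives
`⟪p', x⟫ ≤ ⟪c, x⟫ + ε`. If `λ ≤ 0`, the choice of `λ` forces `δ_C = 0`, so `c = p'`.
-/

open RealInnerProductSpace

lemma sq_norm_sub_sq_norm_le {E : Type*} [SeminormedAddCommGroup E] {c p : E} {μ : ℝ}
    (hc : ‖c‖ ≤ μ) (hp : ‖p‖ ≤ μ) : ‖c‖ ^ 2 - ‖p‖ ^ 2 ≤ 2 * μ * ‖c - p‖ := by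
  have hdiff : ‖c‖ - ‖p‖ ≤ ‖c - p‖ := norm_sub_norm_le c p
  have hfactor : ‖c‖ ^ 2 - ‖p‖ ^ 2 = (‖c‖ - ‖p‖) * (‖c‖ + ‖p‖) := by ring
  nlinarith [norm_nonneg c, norm_nonneg p, norm_nonneg (c - p)]

section InnerProductSpace

variable {E : Type*} [NormedAddCommGroup E] [InnerProductSpace ℝ E]

lemma mul_inner_sub_le_of_half_norm_sq_le {p c x : E} {t K : ℝ}
    (h : (1 / 2) * ‖p + t • x‖ ^ 2 ≤ (1 / 2) * ‖c + t • x‖ ^ 2 + K) :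
    t * ⟪p - c, x⟫ ≤ K + (‖c‖ ^ 2 - ‖p‖ ^ 2) / 2 := by
  rw [norm_add_sq_real, norm_add_sq_real, real_inner_smul_right, real_inner_smul_right] at h
  rw [inner_sub_left]
  linarith

lemma inner_le_inner_add_of_approx_proj {s : Set E} (hs : Bornology.IsBounded s)
    {μ t K ε : ℝ} (hμ : ∀ c ∈ s, ‖c‖ ≤ μ) (hK : 0 ≤ K) (hε : 0 < ε)
    (ht : (K + (1 / 2) * Metric.diam s ^ 2 + μ * Metric.diam s) / ε ≤ t)
    {p c x : E} (hp : p ∈ s) (hc : c ∈ s)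
    (h : (1 / 2) * ‖p + t • x‖ ^ 2 ≤ (1 / 2) * ‖c + t • x‖ ^ 2 + K) :
    ⟪p, x⟫ ≤ ⟪c, x⟫ + ε := by
  set δ := Metric.diam s
  have hδ : ‖c - p‖ ≤ δ := by
    simpa only [dist_eq_norm] using Metric.dist_le_diam_of_mem hs hc hp
  have hμ0 : 0 ≤ μ := (norm_nonneg p).trans (hμ p hp)
  have htε : K + (1 / 2) * δ ^ 2 + μ * δ ≤ t * ε := by
    rwa [div_le_iff₀ hε] at ht
  have hkey : t * ⟪p - c, x⟫ ≤ K + μ * δ := by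
    have hsq := sq_norm_sub_sq_norm_le (hμ c hc) (hμ p hp)
    nlinarith [mul_inner_sub_le_of_half_norm_sq_le h]
  rcases lt_or_ge 0 t with ht0 | ht0
  · have hpc : ⟪p - c, x⟫ ≤ ε := le_of_mul_le_mul_left (by nlinarith) ht0
    rw [inner_sub_left] at hpc
    linarith
  · have hcp : ‖c - p‖ = 0 := by
      nlinarith [norm_nonneg (c - p), mul_nonneg hμ0 ((norm_nonneg _).trans hδ)]
    rw [norm_sub_eq_zero_iff.mp hcp]
    linarith

end InnerProductSpace

theorem kproj_gives_eps_lmo_general {d : ℕ}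
    (C : Set (EuclideanSpace ℝ (Fin d)))
    (hCcomp : IsCompact C)
    (x : EuclideanSpace ℝ (Fin d)) (lam K ε : ℝ) (hε : 0 < ε) (hK : 0 ≤ K)
    (hlam : lam ≥ (K + (1 / 2) * (Metric.diam C) ^ 2
      + sSup ((fun c => ‖c‖) '' C) * Metric.diam C) / ε)
    (p' : EuclideanSpace ℝ (Fin d)) (hp' : p' ∈ C)
    (hproj : (1 / 2) * ‖p' - (-(lam • x))‖ ^ 2 ≤
      sInf ((fun c => (1 / 2) * ‖c - (-(lam • x))‖ ^ 2) '' C) + K) :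
    ⟪p', x⟫ ≤ sInf ((fun c => ⟪c, x⟫) '' C) + ε := by
  have hnorm : ∀ c ∈ C, ‖c‖ ≤ sSup ((fun c => ‖c‖) '' C) := fun c hc =>
    le_csSup (hCcomp.image continuous_norm).bddAbove ⟨c, hc, rfl⟩
  have hsq_bdd : BddBelow ((fun c => (1 / 2) * ‖c - (-(lam • x))‖ ^ 2) '' C) :=
    ⟨0, by rintro _ ⟨c, -, rfl⟩; positivity⟩
  rw [← sub_le_iff_le_add]
  refine le_csInf (Set.Nonempty.image _ ⟨p', hp'⟩) ?_
  rintro _ ⟨c, hc, rfl⟩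
  have hpc := hproj.trans (add_le_add_left (csInf_le hsq_bdd ⟨c, hc, rfl⟩) K)
  simp only [sub_neg_eq_add] at hpc
  have hcx := inner_le_inner_add_of_approx_proj hCcomp.isBounded hnorm hK hε hlam hp' hc hpc
  linarith

/-- Corollary of Theorem 5.2: choosing `λ ≥ (K + δ_C²/2 + μ_C δ_C)/ε`, a
`K`-approximate projection of `-λx` onto `C` is an `ε`-accurate LMO output
for `x` over `C`. -/
theorem kproj_gives_eps_lmo {d : ℕ}
    (C : Set (EuclideanSpace ℝ (Fin d)))
    (hCne : C.Nonempty) (hCcomp : IsCompact C) (hCconv : Convex ℝ C)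
    (x : EuclideanSpace ℝ (Fin d)) (lam K ε : ℝ) (hε : 0 < ε) (hK : 0 ≤ K)
    (hlam : lam ≥ (K + (1 / 2) * (Metric.diam C) ^ 2
      + sSup ((fun c => ‖c‖) '' C) * Metric.diam C) / ε)
    (p' : EuclideanSpace ℝ (Fin d)) (hp' : p' ∈ C)
    (hproj : (1 / 2) * ‖p' - (-(lam • x))‖ ^ 2 ≤
      sInf ((fun c => (1 / 2) * ‖c - (-(lam • x))‖ ^ 2) '' C) + K) :
    ⟪p', x⟫ ≤ sInf ((fun c => ⟪c, x⟫) '' C) + ε :=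
  kproj_gives_eps_lmo_general C hCcomp x lam K ε hε hK hlam p' hp' hproj
end
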